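/- If (α, β) is a Bailey pair relative to a, then so is (α', β') with α'_L = a^L q^{L²} α_L and β'_L = Σ_{r=0}^L a^r q^{r²} β_r / (q;q)_{L-r}. -/

import Mathlib

/-!
Substituting the Bailey pair into `β'_L` and exchanging the two sums, the coefficient of `α_j`
becomes a finite sum over `k` that must collapse to `a^j q^{j²} / ((q;q)_{L-j} (aq;q)_{L+j})`.
After pulling out `(aq;q)_{2j}` and writing `b = a q^{2j}`, this collapse is the identity
`∑_k [n, k]_q q^{k²} b^k (b q^{k+1};q)_{n-k} = 1`, a q-analogue of
`∑_k C(n, k) b^k (1 - b)^{n-k} = 1`. It holds because raising `n` by one has the same effect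
on the sum as replacing `b` by `b q`.
-/

/-- Finite q-shifted factorial `(x;q)_n`. -/
noncomputable def qp (q x : ℂ) (n : ℕ) : ℂ := ∏ k ∈ Finset.range n, (1 - x * q ^ k)

open Finset

@[simp]
lemma qp_zero (q x : ℂ) : qp q x 0 = 1 := prod_range_zero _

lemma qp_succ (q x : ℂ) (n : ℕ) : qp q x (n + 1) = qp q x n * (1 - x * q ^ n) :=
  prod_range_succ _ n

lemma qp_succ' (q x : ℂ) (n : ℕ) : qp q x (n + 1) = (1 - x) * qp q (x * q) n := by
  rw [qp, prod_range_succ', mul_comm, qp]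
  simp only [pow_succ', pow_zero, mul_one, mul_assoc]

lemma qp_add (q x : ℂ) (m n : ℕ) : qp q x (m + n) = qp q x m * qp q (x * q ^ m) n := by
  simp only [qp, prod_range_add, pow_add, mul_assoc]

lemma qp_self_ne_zero {q : ℂ} (hq : ‖q‖ < 1) (n : ℕ) : qp q q n ≠ 0 := by
  refine prod_ne_zero_iff.2 fun k _ => sub_ne_zero.2 fun h => ?_
  have : ‖q * q ^ k‖ < 1 := by
    rw [← pow_succ', norm_pow]
    exact pow_lt_one₀ (norm_nonneg q) hq k.succ_ne_zero
  rw [← h, norm_one] at this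
  exact lt_irrefl 1 this

def qBinomial {R : Type*} [Semiring R] (q : R) : ℕ → ℕ → R
  | _, 0 => 1
  | 0, _ + 1 => 0
  | n + 1, k + 1 => q ^ (k + 1) * qBinomial q n (k + 1) + qBinomial q n k

section qBinomial

variable {R : Type*} [Semiring R] (q : R)

@[simp]
lemma qBinomial_zero_right (n : ℕ) : qBinomial q n 0 = 1 := by
  cases n <;> rfl

lemma qBinomial_succ_succ (n k : ℕ) :
    qBinomial q (n + 1) (k + 1) = q ^ (k + 1) * qBinomial q n (k + 1) + qBinomial q n k := rfl

lemma qBinomial_of_lt {n k : ℕ} (h : n < k) : qBinomial q n k = 0 := by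
  induction n generalizing k with
  | zero => obtain ⟨k, rfl⟩ := Nat.exists_eq_succ_of_ne_zero h.ne'; rfl
  | succ n ih =>
    obtain ⟨k, rfl⟩ := Nat.exists_eq_succ_of_ne_zero (Nat.ne_zero_of_lt h)
    rw [qBinomial_succ_succ, ih (by omega), ih (by omega), mul_zero, add_zero]

@[simp]
lemma qBinomial_self (n : ℕ) : qBinomial q n n = 1 := by
  induction n with
  | zero => rfl
  | succ n ih => rw [qBinomial_succ_succ, qBinomial_of_lt q n.lt_succ_self, ih, mul_zero, zero_add]

end qBinomial

lemma qBinomial_mul_qp (q : ℂ) {n k : ℕ} (hk : k ≤ n) :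
    qBinomial q n k * (qp q q k * qp q q (n - k)) = qp q q n := by
  induction n generalizing k with
  | zero => obtain rfl := Nat.le_zero.1 hk; simp
  | succ n ih =>
    rcases k with _ | k
    · simp
    rcases hk.eq_or_lt with hkn | hkn
    · obtain rfl := Nat.succ_inj.1 hkn
      simp
    obtain ⟨m, rfl⟩ := Nat.exists_eq_add_of_lt (Nat.succ_lt_succ_iff.1 hkn)
    have h₁ := ih (k := k + 1) (by omega)
    have h₂ := ih (k := k) (by omega)
    rw [show k + m + 1 - (k + 1) = m by omega, qp_succ q q k] at h₁
    rw [show k + m + 1 - k = m + 1 by omega, qp_succ q q m] at h₂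
    rw [show k + m + 1 + 1 - (k + 1) = m + 1 by omega, qBinomial_succ_succ, qp_succ q q m,
      qp_succ q q (k + m + 1), qp_succ q q k]
    linear_combination q ^ (k + 1) * (1 - q * q ^ m) * h₁ + (1 - q * q ^ k) * h₂

noncomputable def qBinomialTerm (q b : ℂ) (n k : ℕ) : ℂ :=
  qBinomial q n k * q ^ (k ^ 2) * b ^ k * qp q (b * q ^ (k + 1)) (n - k)

lemma sum_qBinomialTerm_succ (q b : ℂ) (n : ℕ) :
    ∑ k ∈ range (n + 2), qBinomialTerm q b (n + 1) k =
      ∑ k ∈ range (n + 1), qBinomialTerm q (b * q) n k := by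
  let A : ℕ → ℂ := fun k =>
    q ^ k * qBinomial q n k * q ^ (k ^ 2) * b ^ k * qp q (b * q ^ (k + 1)) (n + 1 - k)
  let B : ℕ → ℂ := fun k =>
    qBinomial q n k * q ^ ((k + 1) ^ 2) * b ^ (k + 1) * qp q (b * q ^ (k + 2)) (n - k)
  have hA_zero : qBinomialTerm q b (n + 1) 0 = A 0 := by simp [qBinomialTerm, A]
  have hpascal (k : ℕ) : qBinomialTerm q b (n + 1) (k + 1) = A (k + 1) + B k := by
    simp only [qBinomialTerm, A, B, qBinomial_succ_succ, Nat.add_sub_add_right]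
    ring
  have hA_last : A (n + 1) = 0 := by simp [A, qBinomial_of_lt q n.lt_succ_self]
  have hsplit (k : ℕ) (hk : k ∈ range (n + 1)) : A k + B k = qBinomialTerm q (b * q) n k := by
    have hkn : n + 1 - k = n - k + 1 := by have := mem_range.1 hk; omega
    simp only [qBinomialTerm, A, B, hkn, qp_succ',
      show b * q * q ^ (k + 1) = b * q ^ (k + 2) by ring,
      show b * q ^ (k + 1) * q = b * q ^ (k + 2) by ring]
    ring
  calc ∑ k ∈ range (n + 2), qBinomialTerm q b (n + 1) k
      = ∑ k ∈ range (n + 1), (A (k + 1) + B k) + A 0 := by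
        rw [sum_range_succ', hA_zero, sum_congr rfl fun k _ => hpascal k]
    _ = ∑ k ∈ range (n + 1), (A k + B k) := by
        rw [sum_add_distrib, add_right_comm, ← sum_range_succ', sum_range_succ, hA_last,
          add_zero, sum_add_distrib]
    _ = ∑ k ∈ range (n + 1), qBinomialTerm q (b * q) n k := sum_congr rfl hsplit

lemma sum_qBinomialTerm (q b : ℂ) (n : ℕ) :
    ∑ k ∈ range (n + 1), qBinomialTerm q b n k = 1 := by
  induction n generalizing b with
  | zero => simp [qBinomialTerm]
  | succ n ih => exact (sum_qBinomialTerm_succ q b n).trans (ih (b * q))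

lemma sum_mul_pow_sq_div_qp {q b : ℂ} {n : ℕ} (hq : ‖q‖ < 1) (hb : qp q (b * q) n ≠ 0) :
    ∑ k ∈ range (n + 1), b ^ k * q ^ (k ^ 2) / (qp q q (n - k) * qp q q k * qp q (b * q) k) =
      1 / (qp q q n * qp q (b * q) n) := by
  rw [← sum_qBinomialTerm q b n, sum_div]
  refine sum_congr rfl fun k hk => ?_
  have hkn : k ≤ n := Nat.lt_succ_iff.1 (mem_range.1 hk)
  have hbq : qp q (b * q) n = qp q (b * q) k * qp q (b * q ^ (k + 1)) (n - k) := by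
    have := qp_add q (b * q) k (n - k)
    rwa [Nat.add_sub_cancel' hkn, mul_assoc, ← pow_succ'] at this
  have hqn := qBinomial_mul_qp q hkn
  obtain ⟨-, hbq_ne⟩ := mul_ne_zero_iff.1 (hbq ▸ hb)
  obtain ⟨hqn_ne, -⟩ := mul_ne_zero_iff.1 (hqn ▸ qp_self_ne_zero hq n)
  rw [qBinomialTerm, ← hqn, hbq]
  field_simp

lemma sum_pow_add_sq_div_qp {q a : ℂ} {j n : ℕ} (hq : ‖q‖ < 1)
    (ha : qp q (a * q) (2 * j + n) ≠ 0) :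
    ∑ k ∈ range (n + 1),
        a ^ (j + k) * q ^ ((j + k) ^ 2) / (qp q q (n - k) * qp q q k * qp q (a * q) (2 * j + k)) =
      a ^ j * q ^ (j ^ 2) / (qp q q n * qp q (a * q) (2 * j + n)) := by
  have hshift (m : ℕ) :
      qp q (a * q) (2 * j + m) = qp q (a * q) (2 * j) * qp q (a * q ^ (2 * j) * q) m := by
    rw [qp_add, mul_right_comm]
  have hb : qp q (a * q ^ (2 * j) * q) n ≠ 0 := right_ne_zero_of_mul (hshift n ▸ ha)
  calc ∑ k ∈ range (n + 1),
        a ^ (j + k) * q ^ ((j + k) ^ 2) / (qp q q (n - k) * qp q q k * qp q (a * q) (2 * j + k))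
      = a ^ j * q ^ (j ^ 2) / qp q (a * q) (2 * j) * ∑ k ∈ range (n + 1),
          (a * q ^ (2 * j)) ^ k * q ^ (k ^ 2) /
            (qp q q (n - k) * qp q q k * qp q (a * q ^ (2 * j) * q) k) := by
        rw [mul_sum]
        refine sum_congr rfl fun k _ => ?_
        rw [hshift]
        ring
    _ = a ^ j * q ^ (j ^ 2) / (qp q q n * qp q (a * q) (2 * j + n)) := by
        rw [sum_mul_pow_sq_div_qp hq hb, hshift]
        ring

theorem bailey_chain_special_general (q a : ℂ) (hq1 : ‖q‖ < 1)
    (haq : ∀ n, qp q (a * q) n ≠ 0) (α β : ℕ → ℂ)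
    (hBP : ∀ L, β L = ∑ r ∈ Finset.range (L + 1),
      α r / (qp q q (L - r) * qp q (a * q) (L + r))) :
    ∀ L, (∑ r ∈ Finset.range (L + 1), a ^ r * q ^ (r ^ 2) * β r / qp q q (L - r)) =
      ∑ r ∈ Finset.range (L + 1),
        (a ^ r * q ^ (r ^ 2) * α r) / (qp q q (L - r) * qp q (a * q) (L + r)) := by
  intro L
  -- `g j k` is the contribution of `α j` to the summand `r = j + k` on the left.
  let g : ℕ → ℕ → ℂ := fun j k => α j *
    (a ^ (j + k) * q ^ ((j + k) ^ 2) / (qp q q (L - j - k) * qp q q k * qp q (a * q) (2 * j + k)))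
  have hexpand (r : ℕ) (_ : r ∈ range (L + 1)) :
      a ^ r * q ^ (r ^ 2) * β r / qp q q (L - r) = ∑ j ∈ range (r + 1), g j (r - j) := by
    rw [hBP r, mul_sum, sum_div]
    refine sum_congr rfl fun j hj => ?_
    obtain ⟨k, rfl⟩ := Nat.exists_eq_add_of_le (Nat.lt_succ_iff.1 (mem_range.1 hj))
    rw [Nat.add_sub_cancel_left, Nat.sub_add_eq, show j + k + j = 2 * j + k by ring]
    ring
  have hinner (j : ℕ) (hj : j ∈ range (L + 1)) :
      ∑ k ∈ range (L + 1 - j), g j k =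
        a ^ j * q ^ (j ^ 2) * α j / (qp q q (L - j) * qp q (a * q) (L + j)) := by
    have hjL : j ≤ L := Nat.lt_succ_iff.1 (mem_range.1 hj)
    rw [show L + 1 - j = L - j + 1 by omega, ← mul_sum, sum_pow_add_sq_div_qp hq1 (haq _),
      show 2 * j + (L - j) = L + j by omega]
    ring
  exact (sum_congr rfl hexpand).trans ((sum_range_diag_flip _ g).trans (sum_congr rfl hinner))

/-- the special (ρ₁, ρ₂ → ∞) case of the Bailey chain. -/
theorem bailey_chain_special (q a : ℂ) (hq0 : 0 < ‖q‖) (hq1 : ‖q‖ < 1)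
    (haq : ∀ n, qp q (a * q) n ≠ 0) (α β : ℕ → ℂ)
    (hBP : ∀ L, β L = ∑ r ∈ Finset.range (L + 1),
      α r / (qp q q (L - r) * qp q (a * q) (L + r))) :
    ∀ L, (∑ r ∈ Finset.range (L + 1), a ^ r * q ^ (r ^ 2) * β r / qp q q (L - r)) =
      ∑ r ∈ Finset.range (L + 1),
        (a ^ r * q ^ (r ^ 2) * α r) / (qp q q (L - r) * qp q (a * q) (L + r)) :=
  bailey_chain_special_general q a hq1 haq α β hBP
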